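/- arXiv:hep-th/0702214 — 3 statements merged into one kernel-verified Lean document; each statement's English description precedes it below -/
import Mathlib

section
/- Let θ₀ ∈ (0, π). For any complex θ with 0 ≤ Im(θ) ≤ π one has |S(θ)| ≤ 1, and for any complex θ with -π ≤ Im(θ) ≤ 0 one has |S(θ)| ≥ 1 (whenever S(θ) is defined, i.e. sinh θ + i sin θ₀ ≠ 0). -/
/-! For `c = sin θ₀ ≥ 0` one has `‖w + I c‖² - ‖w - I c‖² = 4 c (Im w)`, so `‖S θ‖ ≤ 1` whenever
`Im (sinh θ) = cosh (Re θ) * sin (Im θ)` is nonnegative, i.e. when `0 ≤ Im θ ≤ π`; symmetrically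
for `-π ≤ Im θ ≤ 0`. -/

open Complex

theorem Complex.sinh_im (z : ℂ) : (sinh z).im = Real.cosh z.re * Real.sin z.im := by
  conv_lhs => rw [← re_add_im z]
  rw [sinh_add, sinh_mul_I, cosh_mul_I, ← ofReal_sinh, ← ofReal_cosh, ← ofReal_sin,
    ← ofReal_cos]
  simp only [add_im, mul_im, ofReal_re, ofReal_im, I_re, I_im]
  ring

theorem Complex.sq_norm_add_mul_I_sub_sq_norm_sub_mul_I (w : ℂ) (c : ℝ) :
    ‖w + I * c‖ ^ 2 - ‖w - I * c‖ ^ 2 = 4 * c * w.im := by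
  simp only [Complex.sq_norm, normSq_apply, add_re, add_im, sub_re, sub_im, mul_re, mul_im,
    I_re, I_im, ofReal_re, ofReal_im]
  ring

theorem Complex.norm_sub_mul_I_le_norm_add_mul_I {w : ℂ} {c : ℝ} (hc : 0 ≤ c)
    (hw : 0 ≤ w.im) : ‖w - I * c‖ ≤ ‖w + I * c‖ := by
  rw [← sq_le_sq₀ (norm_nonneg _) (norm_nonneg _)]
  nlinarith [sq_norm_add_mul_I_sub_sq_norm_sub_mul_I w c, mul_nonneg hc hw]

theorem Complex.norm_add_mul_I_le_norm_sub_mul_I {w : ℂ} {c : ℝ} (hc : 0 ≤ c)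
    (hw : w.im ≤ 0) : ‖w + I * c‖ ≤ ‖w - I * c‖ := by
  rw [← sq_le_sq₀ (norm_nonneg _) (norm_nonneg _)]
  nlinarith [sq_norm_add_mul_I_sub_sq_norm_sub_mul_I w c, mul_nonpos_of_nonneg_of_nonpos hc hw]

theorem abs_S_le_ge (θ₀ : ℝ) (hθ₀ : θ₀ ∈ Set.Ioo 0 Real.pi) (θ : ℂ)
    (hden : Complex.sinh θ + Complex.I * (Real.sin θ₀ : ℂ) ≠ 0) :
    (0 ≤ θ.im → θ.im ≤ Real.pi →
      ‖(Complex.sinh θ - Complex.I * (Real.sin θ₀ : ℂ)) /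
        (Complex.sinh θ + Complex.I * (Real.sin θ₀ : ℂ))‖ ≤ 1) ∧
    (-Real.pi ≤ θ.im → θ.im ≤ 0 →
      1 ≤ ‖(Complex.sinh θ - Complex.I * (Real.sin θ₀ : ℂ)) /
        (Complex.sinh θ + Complex.I * (Real.sin θ₀ : ℂ))‖) := by
  have hs : 0 ≤ Real.sin θ₀ := Real.sin_nonneg_of_nonneg_of_le_pi hθ₀.1.le hθ₀.2.le
  rw [norm_div]
  constructor
  · intro h0 hπ
    have him : 0 ≤ (sinh θ).im :=
      sinh_im θ ▸ mul_nonneg (Real.cosh_pos _).le (Real.sin_nonneg_of_nonneg_of_le_pi h0 hπ)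
    exact div_le_one_of_le₀ (norm_sub_mul_I_le_norm_add_mul_I hs him) (norm_nonneg _)
  · intro hπ h0
    have him : (sinh θ).im ≤ 0 :=
      sinh_im θ ▸ mul_nonpos_of_nonneg_of_nonpos (Real.cosh_pos _).le
        (Real.sin_nonpos_of_nonpos_of_neg_pi_le h0 hπ)
    exact (one_le_div (norm_pos_iff.mpr hden)).mpr (norm_add_mul_I_le_norm_sub_mul_I hs him)
end

section
/- Let σ : ℝ → ℝ be continuous, nonnegative, and even, and fix m R > 0 and integers k₁,…,k_M. Then the function F(t) = Σ_{a=1}^M (mR cosh t_a + 2π k_a t_a) + Σ_{a<b} P(t_a - t_b) (with P as above, P'' = σ ≥ 0, P even) attains a unique global minimum on ℝ^M; consequently the system of Bethe-type equations 2π k_a + mR sinh t_a + Σ_{b≠a} P'(t_a - t_b) = 0 (a = 1,…,M) has a solution. -/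
/-!
The one-variable terms `m R cosh t_a + 2π k_a t_a` are strictly convex and the pair terms
`P (t_a - t_b)` are convex because `P'' = σ ≥ 0`, so `F` is strictly convex and has at most one
minimiser. Each one-variable term grows like `cosh`, while the pair terms are bounded below by
`P 0` (an even convex function is smallest at `0`), so `F` is coercive and attains its minimum.
At the minimiser every partial derivative vanishes, and since `P'` is odd, `∂F/∂t_a` is exactly
the left-hand side of the `a`-th Bethe equation.
-/

open Finset

section

open Filter Set Real

theorem deriv_neg_of_even {𝕜 F : Type*} [NontriviallyNormedField 𝕜] [NormedAddCommGroup F]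
    [NormedSpace 𝕜 F] {f : 𝕜 → F} (hf : ∀ x, f (-x) = f x) (x : 𝕜) :
    deriv f (-x) = -deriv f x := by
  have h := deriv_comp_neg f x
  rw [show (fun x => f (-x)) = f from funext hf] at h
  rw [h, neg_neg]

theorem ConvexOn.apply_zero_le_of_even {E : Type*} [AddCommGroup E] [Module ℝ E] {f : E → ℝ}
    (hf : ConvexOn ℝ univ f) (heven : ∀ x, f (-x) = f x) (x : E) : f 0 ≤ f x := by
  have h := hf.2 (mem_univ x) (mem_univ (-x)) (by norm_num : (0 : ℝ) ≤ 1 / 2)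
    (by norm_num : (0 : ℝ) ≤ 1 / 2) (by norm_num)
  simp only [smul_neg, add_neg_cancel, heven, smul_eq_mul] at h
  linarith

theorem ContDiff.convexOn_univ_of_deriv_deriv_nonneg {f : ℝ → ℝ} (hf : ContDiff ℝ 2 f)
    (h : ∀ x, 0 ≤ deriv (deriv f) x) : ConvexOn ℝ univ f := by
  obtain ⟨hdiff, -, hderiv⟩ := (contDiff_succ_iff_deriv (n := 1)).mp hf
  exact convexOn_univ_of_deriv2_nonneg hdiff (hderiv.differentiable one_ne_zero) h

theorem ConvexOn.sum {𝕜 E β ι : Type*} [Field 𝕜] [LinearOrder 𝕜] [IsStrictOrderedRing 𝕜]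
    [AddCommGroup E] [Module 𝕜 E] [AddCommMonoid β] [PartialOrder β] [IsOrderedAddMonoid β]
    [Module 𝕜 β] [PosSMulMono 𝕜 β] {s : Set E} (hs : Convex 𝕜 s) {t : Finset ι}
    {f : ι → E → β} (hf : ∀ i ∈ t, ConvexOn 𝕜 s (f i)) :
    ConvexOn 𝕜 s (fun x => ∑ i ∈ t, f i x) := by
  simpa only [← Finset.sum_apply] using
    Finset.sum_induction f (ConvexOn 𝕜 s) (fun _ _ => ConvexOn.add) (convexOn_const 0 hs) hf

theorem strictConvexOn_univ_sum_apply {ι : Type*} [Fintype ι] {E : ι → Type*}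
    [∀ i, AddCommGroup (E i)] [∀ i, Module ℝ (E i)] {f : ∀ i, E i → ℝ}
    (hf : ∀ i, StrictConvexOn ℝ univ (f i)) :
    StrictConvexOn ℝ univ (fun x : ∀ i, E i => ∑ i, f i (x i)) := by
  refine ⟨convex_univ, fun x _ y _ hxy a b ha hb hab => ?_⟩
  obtain ⟨i, hi⟩ := Function.ne_iff.mp hxy
  simp only [smul_sum, ← sum_add_distrib]
  exact sum_lt_sum (fun j _ => (hf j).convexOn.2 (mem_univ _) (mem_univ _) ha.le hb.le hab)
    ⟨i, mem_univ i, (hf i).2 (mem_univ _) (mem_univ _) hi ha hb hab⟩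

theorem tendsto_sum_apply_cocompact_atTop {ι : Type*} [Fintype ι] {X : ι → Type*}
    [∀ i, TopologicalSpace (X i)] {g : ∀ i, X i → ℝ} (hbdd : ∀ i, BddBelow (range (g i)))
    (htend : ∀ i, Tendsto (g i) (cocompact (X i)) atTop) :
    Tendsto (fun x => ∑ i, g i (x i)) (cocompact (∀ i, X i)) atTop := by
  classical
  choose C hC using hbdd
  rw [← coprodᵢ_cocompact, Filter.coprodᵢ, tendsto_iSup]
  intro i
  simp_rw [← add_sum_erase univ _ (mem_univ i)]
  exact tendsto_atTop_add_right_of_le _ (∑ j ∈ univ.erase i, C j) ((htend i).comp tendsto_comap)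
    fun x => sum_le_sum fun j _ => hC j ⟨x j, rfl⟩

theorem sum_sum_lt_mul_single_sub {ι R : Type*} [Fintype ι] [LinearOrder ι] [CommRing R]
    (f : ι → ι → R) (hf : ∀ i j, f j i = -f i j) (a : ι) :
    ∑ i, ∑ j, (if i < j then f i j * ((Pi.single a 1 : ι → R) i - (Pi.single a 1 : ι → R) j)
      else 0) = ∑ j ∈ univ.filter (· ≠ a), f a j := by
  have hsplit : ∀ i j,
      (if i < j then f i j * ((Pi.single a 1 : ι → R) i - (Pi.single a 1 : ι → R) j) else 0) =
        (if i = a then (if a < j then f a j else 0) else 0) +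
          (if j = a then (if i < a then f a i else 0) else 0) := by
    intro i j
    have := hf i j
    simp only [Pi.single_apply]
    split_ifs <;> subst_vars <;> grind
  simp only [hsplit, sum_add_distrib, sum_ite_eq', sum_ite_irrel, sum_const_zero,
    Finset.mem_univ, if_true]
  rw [← sum_add_distrib, sum_filter]
  refine sum_congr rfl fun j _ => ?_
  rcases lt_trichotomy a j with h | rfl | h
  · simp [h, h.ne', not_lt_of_gt h]
  · simp
  · simp [h, h.ne, not_lt_of_gt h]

theorem Real.sq_div_four_le_cosh (x : ℝ) : x ^ 2 / 4 ≤ cosh x := by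
  have h := quadratic_le_exp_of_nonneg (abs_nonneg x)
  rw [← cosh_abs, cosh_eq]
  nlinarith [exp_pos (-|x|), sq_abs x, abs_nonneg x]

theorem Real.le_mul_cosh_add_mul {A : ℝ} (hA : 0 < A) (c x : ℝ) :
    A / 8 * x ^ 2 - 2 * c ^ 2 / A ≤ A * cosh x + c * x := by
  have hsq : 0 ≤ A / 8 * (x + 4 * c / A) ^ 2 := by positivity
  have hexpand : A / 8 * (x + 4 * c / A) ^ 2 = A / 8 * x ^ 2 + c * x + 2 * c ^ 2 / A := by
    field_simp
    ring
  nlinarith [mul_le_mul_of_nonneg_left (sq_div_four_le_cosh x) hA.le]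

theorem Real.tendsto_mul_cosh_add_mul_cocompact {A : ℝ} (hA : 0 < A) (c : ℝ) :
    Tendsto (fun x => A * cosh x + c * x) (cocompact ℝ) atTop := by
  have hnorm : Tendsto (fun x : ℝ => A / 8 * ‖x‖ ^ 2 - 2 * c ^ 2 / A) (cocompact ℝ) atTop :=
    tendsto_atTop_add_const_right _ _
      (((tendsto_pow_atTop two_ne_zero).comp tendsto_norm_cocompact_atTop).const_mul_atTop
        (by positivity))
  refine tendsto_atTop_mono (fun x => ?_) hnorm
  rw [norm_eq_abs, sq_abs]
  exact le_mul_cosh_add_mul hA c x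

theorem Real.strictConvexOn_mul_cosh_add_mul {A : ℝ} (hA : 0 < A) (c : ℝ) :
    StrictConvexOn ℝ univ (fun x => A * cosh x + c * x) := by
  have h1 : ∀ x, HasDerivAt (fun x => A * cosh x + c * x) (A * sinh x + c) x := fun x => by
    simpa using ((hasDerivAt_cosh x).const_mul A).fun_add ((hasDerivAt_id x).const_mul c)
  have h2 : ∀ x, HasDerivAt (fun x => A * sinh x + c) (A * cosh x) x := fun x =>
    ((hasDerivAt_sinh x).const_mul A).add_const c
  refine strictConvexOn_univ_of_deriv2_pos (by fun_prop) fun x => ?_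
  rw [Function.iterate_succ_apply, Function.iterate_one, funext fun x => (h1 x).deriv,
    (h2 x).deriv]
  exact mul_pos hA (cosh_pos x)

variable {ι : Type*} [Fintype ι] [LinearOrder ι]

noncomputable def pairEnergy (P : ℝ → ℝ) (t : ι → ℝ) : ℝ :=
  ∑ a, ∑ b, if a < b then P (t a - t b) else 0

noncomputable def betheEnergy (A : ℝ) (c : ι → ℝ) (P : ℝ → ℝ) (t : ι → ℝ) : ℝ :=
  ∑ a, (A * cosh (t a) + c a * t a) + pairEnergy P t

theorem ConvexOn.pairEnergy {P : ℝ → ℝ} (hP : ConvexOn ℝ univ P) :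
    ConvexOn ℝ univ (pairEnergy (ι := ι) P) := by
  refine ConvexOn.sum convex_univ fun a _ => ConvexOn.sum convex_univ fun b _ => ?_
  by_cases hab : a < b
  · simp only [hab, if_true]
    exact hP.comp_linearMap ((LinearMap.proj a : (ι → ℝ) →ₗ[ℝ] ℝ) - LinearMap.proj b)
  · simpa [hab] using convexOn_const (0 : ℝ) convex_univ

theorem pairEnergy_zero_le {P : ℝ → ℝ} (hP0 : ∀ x, P 0 ≤ P x) (t : ι → ℝ) :
    pairEnergy P (0 : ι → ℝ) ≤ pairEnergy P t :=
  sum_le_sum fun a _ => sum_le_sum fun b _ => by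
    split_ifs
    · simpa using hP0 (t a - t b)
    · rfl

theorem continuous_betheEnergy (A : ℝ) (c : ι → ℝ) {P : ℝ → ℝ} (hP : Continuous P) :
    Continuous (betheEnergy A c P) := by
  unfold betheEnergy pairEnergy
  refine (continuous_finsetSum _ fun a _ => by fun_prop).add
    (continuous_finsetSum _ fun a _ => continuous_finsetSum _ fun b _ => ?_)
  exact Continuous.if_const _ (by fun_prop) continuous_const

theorem strictConvexOn_betheEnergy {A : ℝ} (hA : 0 < A) (c : ι → ℝ) {P : ℝ → ℝ}
    (hP : ConvexOn ℝ univ P) : StrictConvexOn ℝ univ (betheEnergy A c P) :=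
  (strictConvexOn_univ_sum_apply fun a => strictConvexOn_mul_cosh_add_mul hA (c a)).add_convexOn
    hP.pairEnergy

theorem tendsto_betheEnergy_cocompact {A : ℝ} (hA : 0 < A) (c : ι → ℝ) {P : ℝ → ℝ}
    (hP0 : ∀ x, P 0 ≤ P x) : Tendsto (betheEnergy A c P) (cocompact (ι → ℝ)) atTop := by
  have htend a := tendsto_mul_cosh_add_mul_cocompact hA (c a)
  have hbdd a : BddBelow (range fun x => A * cosh x + c a * x) := by
    obtain ⟨x, hx⟩ := (by fun_prop : Continuous fun x => A * cosh x + c a * x).exists_forall_le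
      (htend a)
    exact ⟨_, forall_mem_range.2 hx⟩
  exact tendsto_atTop_add_right_of_le _ _ (tendsto_sum_apply_cocompact_atTop hbdd htend)
    (pairEnergy_zero_le hP0)

theorem existsUnique_forall_betheEnergy_le {A : ℝ} (hA : 0 < A) (c : ι → ℝ) {P : ℝ → ℝ}
    (hPc : Continuous P) (hP : ConvexOn ℝ univ P) (hP0 : ∀ x, P 0 ≤ P x) :
    ∃! t : ι → ℝ, ∀ s, betheEnergy A c P t ≤ betheEnergy A c P s := by
  obtain ⟨t, ht⟩ := (continuous_betheEnergy A c hPc).exists_forall_le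
    (tendsto_betheEnergy_cocompact hA c hP0)
  exact ⟨t, ht, fun s hs => (strictConvexOn_betheEnergy hA c hP).eq_of_isMinOn
    (fun u _ => hs u) (fun u _ => ht u) (mem_univ s) (mem_univ t)⟩

theorem hasDerivAt_betheEnergy_add_smul {P : ℝ → ℝ} (hP : Differentiable ℝ P) (A : ℝ)
    (c : ι → ℝ) (t v : ι → ℝ) (x : ℝ) :
    HasDerivAt (fun y => betheEnergy A c P (t + y • v))
      (∑ a, (A * sinh ((t + x • v) a) + c a) * v a + ∑ a, ∑ b,
        if a < b then deriv P ((t + x • v) a - (t + x • v) b) * (v a - v b) else 0) x := by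
  have hcoord : ∀ a, HasDerivAt (fun y => (t + y • v) a) (v a) x := fun a => by
    simpa using ((hasDerivAt_id x).mul_const (v a)).const_add (t a)
  unfold betheEnergy pairEnergy
  refine (HasDerivAt.fun_sum fun a _ => ?_).fun_add
    (HasDerivAt.fun_sum fun a _ => HasDerivAt.fun_sum fun b _ => ?_)
  · simpa [add_mul, mul_assoc] using
      ((hcoord a).cosh.const_mul A).fun_add ((hcoord a).const_mul (c a))
  · split_ifs
    · exact (hP _).hasDerivAt.comp x ((hcoord a).sub (hcoord b))
    · exact hasDerivAt_const x 0

theorem bethe_equations_of_forall_betheEnergy_le {P : ℝ → ℝ} (hP : Differentiable ℝ P)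
    (hodd : ∀ x, deriv P (-x) = -deriv P x) {A : ℝ} {c t : ι → ℝ}
    (ht : ∀ s, betheEnergy A c P t ≤ betheEnergy A c P s) (a : ι) :
    c a + A * sinh (t a) + ∑ b ∈ univ.filter (· ≠ a), deriv P (t a - t b) = 0 := by
  have hmin : IsLocalMin (fun y : ℝ => betheEnergy A c P (t + y • Pi.single a 1)) 0 :=
    Eventually.of_forall fun y => by simpa using ht _
  have hder := hasDerivAt_betheEnergy_add_smul hP A c t (Pi.single a 1) 0
  rw [zero_smul, add_zero, sum_sum_lt_mul_single_sub (fun i j => deriv P (t i - t j))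
    (fun i j => by rw [← neg_sub, hodd]) a] at hder
  have hzero := hmin.hasDerivAt_eq_zero hder
  simp only [Pi.single_apply, mul_ite, mul_one, mul_zero, sum_ite_eq', Finset.mem_univ, if_true]
    at hzero
  linarith

end

theorem bethe_min_exists_unique_general (M : ℕ) (m R : ℝ) (hmR : 0 < m * R)
    (k : Fin M → ℤ) (σ P : ℝ → ℝ)
    (hσ : ∀ x, 0 ≤ σ x)
    (hP : ContDiff ℝ 2 P) (hPeven : ∀ x, P (-x) = P x)
    (hP'' : ∀ x, deriv (deriv P) x = σ x)
    (F : (Fin M → ℝ) → ℝ)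
    (hF : ∀ t, F t = (∑ a, (m * R * Real.cosh (t a) + 2 * Real.pi * (k a : ℝ) * t a)) +
        ∑ a, ∑ b, if a < b then P (t a - t b) else 0) :
    (∃! t : Fin M → ℝ, ∀ s : Fin M → ℝ, F t ≤ F s) ∧
    (∃ t : Fin M → ℝ, ∀ a, 2 * Real.pi * (k a : ℝ) + m * R * Real.sinh (t a) +
        ∑ b ∈ univ.filter (· ≠ a), deriv P (t a - t b) = 0) := by
  have hPconv : ConvexOn ℝ Set.univ P :=
    hP.convexOn_univ_of_deriv_deriv_nonneg fun x => hP'' x ▸ hσ x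
  obtain rfl : F = betheEnergy (m * R) (fun a => 2 * Real.pi * k a) P := funext hF
  obtain ⟨t, ht, huniq⟩ := existsUnique_forall_betheEnergy_le hmR
    (fun a : Fin M => 2 * Real.pi * k a) hP.continuous hPconv (hPconv.apply_zero_le_of_even hPeven)
  exact ⟨⟨t, ht, huniq⟩, t, bethe_equations_of_forall_betheEnergy_le
    (hP.differentiable (by norm_num)) (deriv_neg_of_even hPeven) ht⟩

theorem bethe_min_exists_unique (M : ℕ) (m R : ℝ) (hmR : 0 < m * R)
    (k : Fin M → ℤ) (σ P : ℝ → ℝ)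
    (hσcont : Continuous σ) (hσ : ∀ x, 0 ≤ σ x) (hσeven : ∀ x, σ (-x) = σ x)
    (hP : ContDiff ℝ 2 P) (hPeven : ∀ x, P (-x) = P x)
    (hP'' : ∀ x, deriv (deriv P) x = σ x)
    (F : (Fin M → ℝ) → ℝ)
    (hF : ∀ t, F t = (∑ a, (m * R * Real.cosh (t a) + 2 * Real.pi * (k a : ℝ) * t a)) +
        ∑ a, ∑ b, if a < b then P (t a - t b) else 0) :
    (∃! t : Fin M → ℝ, ∀ s : Fin M → ℝ, F t ≤ F s) ∧
    (∃ t : Fin M → ℝ, ∀ a, 2 * Real.pi * (k a : ℝ) + m * R * Real.sinh (t a) +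
        ∑ b ∈ univ.filter (· ≠ a), deriv P (t a - t b) = 0) :=
  bethe_min_exists_unique_general M m R hmR k σ P hσ hP hPeven hP'' F hF
end

section
/- Suppose q : ℂ → ℂ satisfies the quantum Wronskian relation q(u+iδ)q(u−iδ) − q(u+iδ')q(u−iδ') = 1 for all u, where δ' = δ − b. Define q₊(u) = q(u), q₋(u) = q(u − i/b), and t(u) = q₊(u+ib)q₋(u−ib) − q₊(u−ib)q₋(u+ib). If additionally 2δ = b + 1/b, then t and q satisfy Baxter's T-Q relation t(u) q(u) = q(u + ib) + q(u − ib) for all u. -/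
open Complex

theorem baxter_TQ_from_wronskian (b : ℝ) (hb : 0 < b) (δ δ' : ℝ)
    (hδ : 2 * δ = b + 1 / b) (hδ' : δ' = δ - b) (q : ℂ → ℂ)
    (hWr : ∀ u : ℂ, q (u + Complex.I * δ) * q (u - Complex.I * δ)
        - q (u + Complex.I * δ') * q (u - Complex.I * δ') = 1)
    (t : ℂ → ℂ)
    (ht : ∀ u : ℂ, t u = q (u + Complex.I * b) * q (u - Complex.I * b - Complex.I / b)
        - q (u - Complex.I * b) * q (u + Complex.I * b - Complex.I / b)) :
    ∀ u : ℂ, t u * q u = q (u + Complex.I * b) + q (u - Complex.I * b) := by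
  intro u
  subst hδ'
  have hbc : (b : ℂ) ≠ 0 := by exact_mod_cast hb.ne'
  have hδc : 2 * (δ : ℂ) = (b : ℂ) + 1 / b := by exact_mod_cast congrArg Complex.ofReal hδ
  have h1 := hWr (u + Complex.I * b - Complex.I * δ)
  have h2 := hWr (u - Complex.I * δ)
  push_cast at h1 h2
  rw [show u + Complex.I * b - Complex.I * δ + Complex.I * δ = u + Complex.I * b by ring,
      show u + Complex.I * b - Complex.I * δ - Complex.I * δ = u - Complex.I / b by
        linear_combination -Complex.I * hδc,
      show u + Complex.I * b - Complex.I * δ + Complex.I * ((δ : ℂ) - b) = u by ring,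
      show u + Complex.I * b - Complex.I * δ - Complex.I * ((δ : ℂ) - b)
          = u + Complex.I * b - Complex.I / b by
        linear_combination -Complex.I * hδc] at h1
  rw [show u - Complex.I * δ + Complex.I * δ = u by ring,
      show u - Complex.I * δ - Complex.I * δ = u - Complex.I * b - Complex.I / b by
        linear_combination -Complex.I * hδc,
      show u - Complex.I * δ + Complex.I * ((δ : ℂ) - b) = u - Complex.I * b by ring,
      show u - Complex.I * δ - Complex.I * ((δ : ℂ) - b) = u - Complex.I / b by
        linear_combination -Complex.I * hδc] at h2
  rw [ht u]
  linear_combination q (u + Complex.I * b) * h2 + q (u - Complex.I * b) * h1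
end
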